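/- For the bivariate Rayleigh density f(s₁,s₂) = (4s₁s₂/(σ₁²σ₂²(1−ρ²)))·exp(−(s₁²/σ₁² + s₂²/σ₂²)/(1−ρ²))·I₀((2/(1−ρ²))·√(ρ²·(s₁²/σ₁²)·(s₂²/σ₂²))) on s₁, s₂ ≥ 0 with σ₁², σ₂² > 0 and 0 ≤ ρ² < 1, the marginal density of S₁ is f_{S₁}(s₁) = (2s₁/σ₁²)·exp(−s₁²/σ₁²) for s₁ ≥ 0. -/

import Mathlib

open MeasureTheory Real Set

/-- The zeroth-order modified Bessel function of the first kind,
I₀(x) = (1/π)∫₀^π exp(x cos φ) dφ. -/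
noncomputable def besselI0 (x : ℝ) : ℝ :=
  (1 / Real.pi) * ∫ φ in (0:ℝ)..Real.pi, Real.exp (x * Real.cos φ)

/-- The bivariate Rayleigh density with parameters σ₁², σ₂² and power correlation ρ². -/
noncomputable def bivRayleighPDF (σ1sq σ2sq ρsq s₁ s₂ : ℝ) : ℝ :=
  (4 * s₁ * s₂ / (σ1sq * σ2sq * (1 - ρsq)))
    * Real.exp (-(s₁^2 / σ1sq + s₂^2 / σ2sq) / (1 - ρsq))
    * besselI0 ((2 / (1 - ρsq)) * Real.sqrt (ρsq * (s₁^2 / σ1sq) * (s₂^2 / σ2sq)))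

/-! Everything rests on `∫₀^∞ s e^{-α s²} I₀(β s) ds = e^{β²/(4α)} / (2α)`. To
evaluate it, integrate `exp (-α |p|² + β p₁)` over the plane twice: as a product of two
one-dimensional Gaussians (completing the square) it is `(π/α) e^{β²/(4α)}`, while in polar
coordinates the angular integral of `exp (β r cos θ)` is `2π I₀(β r)`. The joint density in `s₂` is
a constant multiple of this integrand with `α = 1/(σ₂²(1-ρ²))`, and the resulting factor
`e^{β²/(4α)}` turns `exp (-s₁²/(σ₁²(1-ρ²)))` into `exp (-s₁²/σ₁²)`. -/

theorem integrableOn_comp_polarCoord_symm {E : Type*} [NormedAddCommGroup E] [NormedSpace ℝ E]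
    {f : ℝ × ℝ → E} (hf : Integrable f) :
    IntegrableOn (fun p => p.1 • f (polarCoord.symm p)) polarCoord.target := by
  have h := (integrableOn_image_iff_integrableOn_abs_det_fderiv_smul volume
    polarCoord.open_target.measurableSet
    (fun p _ => (hasFDerivAt_polarCoord_symm p).hasFDerivWithinAt) polarCoord.symm.injOn f).mp
  rw [polarCoord.symm_image_target_eq_source] at h
  refine (h hf.integrableOn).congr_fun (fun p hp => ?_) polarCoord.open_target.measurableSet
  simp only [det_fderivPolarCoordSymm, abs_of_pos (show 0 < p.1 from hp.1)]

section Gaussian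

variable {α : ℝ} (β : ℝ)

theorem exp_neg_mul_sq_add_mul_eq (hα : α ≠ 0) (x : ℝ) :
    exp (-α * x ^ 2 + β * x) = exp (β ^ 2 / (4 * α)) * exp (-α * (x - β / (2 * α)) ^ 2) := by
  rw [← exp_add]
  congr 1
  field_simp
  ring

theorem integrable_exp_neg_mul_sq_add_mul (hα : 0 < α) :
    Integrable fun x : ℝ => exp (-α * x ^ 2 + β * x) := by
  simp_rw [exp_neg_mul_sq_add_mul_eq β hα.ne']
  exact ((integrable_exp_neg_mul_sq hα).comp_sub_right _).const_mul _

theorem integral_exp_neg_mul_sq_add_mul (hα : 0 < α) :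
    ∫ x : ℝ, exp (-α * x ^ 2 + β * x) = √(π / α) * exp (β ^ 2 / (4 * α)) := by
  simp_rw [exp_neg_mul_sq_add_mul_eq β hα.ne', integral_const_mul,
    integral_sub_right_eq_self (fun x => exp (-α * x ^ 2)), integral_gaussian]
  ring

theorem exp_neg_mul_normSq_add_mul_fst (p : ℝ × ℝ) :
    exp (-α * (p.1 ^ 2 + p.2 ^ 2) + β * p.1)
      = exp (-α * p.1 ^ 2 + β * p.1) * exp (-α * p.2 ^ 2) := by
  rw [← exp_add]
  ring_nf

theorem integrable_exp_neg_mul_normSq_add_mul_fst (hα : 0 < α) :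
    Integrable fun p : ℝ × ℝ => exp (-α * (p.1 ^ 2 + p.2 ^ 2) + β * p.1) := by
  simp_rw [exp_neg_mul_normSq_add_mul_fst]
  exact (integrable_exp_neg_mul_sq_add_mul β hα).mul_prod (integrable_exp_neg_mul_sq hα)

theorem integral_exp_neg_mul_normSq_add_mul_fst (hα : 0 < α) :
    ∫ p : ℝ × ℝ, exp (-α * (p.1 ^ 2 + p.2 ^ 2) + β * p.1) = π / α * exp (β ^ 2 / (4 * α)) := by
  simp_rw [exp_neg_mul_normSq_add_mul_fst]
  rw [Measure.volume_eq_prod, integral_prod_mul (fun x => exp (-α * x ^ 2 + β * x))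
    (fun y => exp (-α * y ^ 2)), integral_exp_neg_mul_sq_add_mul β hα,
    integral_gaussian, mul_right_comm, mul_self_sqrt (div_nonneg pi_pos.le hα.le)]

end Gaussian

theorem integral_exp_mul_cos_Ioo_neg_pi_pi (c : ℝ) :
    ∫ θ in Ioo (-π) π, exp (c * cos θ) = 2 * π * besselI0 c := by
  have hint : ∀ a b : ℝ, IntervalIntegrable (fun θ => exp (c * cos θ)) volume a b :=
    fun a b => (by fun_prop : Continuous fun θ => exp (c * cos θ)).intervalIntegrable a b
  have hsymm : ∫ θ in (-π)..0, exp (c * cos θ) = ∫ θ in (0)..π, exp (c * cos θ) := by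
    simpa using (intervalIntegral.integral_comp_neg (a := 0) (b := π) fun θ => exp (c * cos θ)).symm
  rw [← integral_Ioc_eq_integral_Ioo, ← intervalIntegral.integral_of_le (by linarith [pi_pos]),
    ← intervalIntegral.integral_add_adjacent_intervals (hint _ 0) (hint 0 _), hsymm, besselI0]
  field_simp
  ring

theorem polarCoord_symm_smul_exp_neg_mul_normSq_add_mul_fst (α β : ℝ) (p : ℝ × ℝ) :
    p.1 • exp (-α * ((polarCoord.symm p).1 ^ 2 + (polarCoord.symm p).2 ^ 2)
        + β * (polarCoord.symm p).1)
      = p.1 * exp (-α * p.1 ^ 2) * exp (β * p.1 * cos p.2) := by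
  rw [smul_eq_mul, mul_assoc, ← exp_add, polarCoord_symm_apply]
  congr 2
  linear_combination (-α * p.1 ^ 2) * sin_sq_add_cos_sq p.2

theorem integral_mul_exp_neg_mul_sq_mul_besselI0 {α : ℝ} (hα : 0 < α) (β : ℝ) :
    ∫ r in Ioi 0, r * exp (-α * r ^ 2) * besselI0 (β * r) = exp (β ^ 2 / (4 * α)) / (2 * α) := by
  have hpolar := polarCoord_symm_smul_exp_neg_mul_normSq_add_mul_fst α β
  have hint : IntegrableOn (fun p : ℝ × ℝ => p.1 * exp (-α * p.1 ^ 2) * exp (β * p.1 * cos p.2))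
      (Ioi 0 ×ˢ Ioo (-π) π) := by
    change IntegrableOn _ polarCoord.target
    simpa only [hpolar] using
      integrableOn_comp_polarCoord_symm (integrable_exp_neg_mul_normSq_add_mul_fst β hα)
  have h : 2 * π * ∫ r in Ioi 0, r * exp (-α * r ^ 2) * besselI0 (β * r)
      = π / α * exp (β ^ 2 / (4 * α)) := calc
    _ = ∫ r in Ioi 0, ∫ θ in Ioo (-π) π, r * exp (-α * r ^ 2) * exp (β * r * cos θ) := by
      rw [← integral_const_mul]
      congr 1 with r
      rw [integral_const_mul, integral_exp_mul_cos_Ioo_neg_pi_pi]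
      ring
    _ = ∫ p in polarCoord.target, p.1 • exp (-α * ((polarCoord.symm p).1 ^ 2
          + (polarCoord.symm p).2 ^ 2) + β * (polarCoord.symm p).1) := by
      simp_rw [hpolar]
      exact (setIntegral_prod _ hint).symm
    _ = π / α * exp (β ^ 2 / (4 * α)) := by
      rw [integral_comp_polarCoord_symm
          (fun p : ℝ × ℝ => exp (-α * (p.1 ^ 2 + p.2 ^ 2) + β * p.1)),
        integral_exp_neg_mul_normSq_add_mul_fst β hα]
  generalize (∫ r in Ioi 0, r * exp (-α * r ^ 2) * besselI0 (β * r)) = I at h ⊢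
  field_simp at h ⊢
  linear_combination h

theorem bivRayleighPDF_eq_mul (σ1sq σ2sq ρsq s₁ : ℝ) {s₂ : ℝ} (hs₂ : 0 ≤ s₂) :
    bivRayleighPDF σ1sq σ2sq ρsq s₁ s₂
      = 4 * s₁ / (σ1sq * σ2sq * (1 - ρsq)) * exp (-(s₁ ^ 2 / σ1sq) / (1 - ρsq))
        * (s₂ * exp (-(1 / (σ2sq * (1 - ρsq))) * s₂ ^ 2)
          * besselI0 (2 / (1 - ρsq) * √(ρsq * (s₁ ^ 2 / σ1sq) / σ2sq) * s₂)) := by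
  have hsqrt : √(ρsq * (s₁ ^ 2 / σ1sq) * (s₂ ^ 2 / σ2sq)) = √(ρsq * (s₁ ^ 2 / σ1sq) / σ2sq) * s₂ := by
    rw [← sqrt_sq hs₂, ← sqrt_mul' _ (sq_nonneg s₂), sqrt_sq hs₂]
    ring_nf
  have hexp : exp (-(s₁ ^ 2 / σ1sq + s₂ ^ 2 / σ2sq) / (1 - ρsq))
      = exp (-(s₁ ^ 2 / σ1sq) / (1 - ρsq)) * exp (-(1 / (σ2sq * (1 - ρsq))) * s₂ ^ 2) := by
    rw [← exp_add, one_div, mul_inv]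
    ring_nf
  rw [bivRayleighPDF, hsqrt, ← mul_assoc (2 / (1 - ρsq)), hexp]
  ring

/-- The marginal of the bivariate Rayleigh density is the univariate Rayleigh density. -/
theorem bivRayleigh_marginal (σ1sq σ2sq ρsq : ℝ)
    (h1 : 0 < σ1sq) (h2 : 0 < σ2sq) (hρ0 : 0 ≤ ρsq) (hρ1 : ρsq < 1) :
    ∀ s₁ : ℝ, 0 ≤ s₁ →
      ∫ s₂ in Ioi (0:ℝ), bivRayleighPDF σ1sq σ2sq ρsq s₁ s₂
        = (2 * s₁ / σ1sq) * Real.exp (-(s₁^2) / σ1sq) := by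
  intro s₁ _
  have hρ : 0 < 1 - ρsq := by linarith
  have hexponent : -(s₁ ^ 2 / σ1sq) / (1 - ρsq)
      + (2 / (1 - ρsq) * √(ρsq * (s₁ ^ 2 / σ1sq) / σ2sq)) ^ 2 / (4 * (1 / (σ2sq * (1 - ρsq))))
      = -s₁ ^ 2 / σ1sq := by
    rw [mul_pow, sq_sqrt (by positivity)]
    field_simp
    ring
  rw [setIntegral_congr_fun measurableSet_Ioi fun s₂ hs₂ => bivRayleighPDF_eq_mul _ _ _ _ hs₂.le,
    integral_const_mul, integral_mul_exp_neg_mul_sq_mul_besselI0 (by positivity), ← hexponent,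
    exp_add]
  field_simp
  ring
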